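/- arXiv:1406.5895 — 6 statements merged into one kernel-verified Lean document; each statement's English description precedes it below -/
import Mathlib

section
/- For every integer n > 0 there exists a universal Lyndon word of degree n. -/
/-- `v` is a conjugate (cyclic rotation) of `w` : `w = w₁w₂` and `v = w₂w₁`. -/
def IsConjugate {α : Type*} (w v : List α) : Prop :=
  ∃ w₁ w₂ : List α, w = w₁ ++ w₂ ∧ v = w₂ ++ w₁

/-- `u` is a cyclic factor of `w` : `u` is a factor of `ww` and `|u| ≤ |w|`. -/
def IsCyclicFactor {α : Type*} (w u : List α) : Prop :=
  u <:+: (w ++ w) ∧ u.length ≤ w.length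

/-- The number of occurrences of `u` as a cyclic factor of `w`, i.e. the number of
occurrences of `u` in `ww` beginning at one of the first `|w|` positions. -/
def cyclicOcc {α : Type*} [DecidableEq α] (w u : List α) : ℕ :=
  ((Finset.range w.length).filter fun i => u <+: (w ++ w).drop i).card

/-- `w` is lexicographically strictly smaller, with respect to the lexicographic order
induced by the order `r` on the letters, than all of its proper conjugates. -/
def IsLyndonWith {n : ℕ} (r : Fin n → Fin n → Prop) (w : List (Fin n)) : Prop :=
  ∀ w₁ w₂ : List (Fin n), w = w₁ ++ w₂ → w₁ ≠ [] → w₂ ≠ [] →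
    List.Lex r w (w₂ ++ w₁)

/-- `w` is a Lyndon word: it is Lyndon with respect to some total order on the alphabet. -/
def IsLyndon {n : ℕ} (w : List (Fin n)) : Prop :=
  ∃ r : Fin n → Fin n → Prop, IsStrictTotalOrder (Fin n) r ∧ IsLyndonWith r w

/-- A universal Lyndon word of degree `n` : a word over `Σ_n` of length `n!`
all of whose conjugates are Lyndon words. -/
def IsULW (n : ℕ) (w : List (Fin n)) : Prop :=
  w.length = Nat.factorial n ∧ ∀ v, IsConjugate w v → IsLyndon v

/-! A shorthand universal cycle for the permutations of `Fin n` is a cyclic word of length `n!`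
whose windows of `n - 1` consecutive letters consist of distinct letters and are pairwise distinct.
Such a cycle is Lyndon in every rotation: a rotation `v` and a proper conjugate of `v` first differ
at some index `t < n - 1`, where `v` carries a letter occurring in `v` for the first time, while the
conjugate carries a letter not occurring in `v` before index `t + 1`; so `v` is smaller for the
order ranking letters by their first occurrence in `v`.

Cycles exist for every `n ≥ 1` by induction: from a cycle for `n` letters, replace its `i`-th
window by the block made of this window, the letter it misses, and a new letter. A window of the
new cycle is located inside its block by the position of the new letter, and the rest of it
recovers the window of the old cycle, since a block minus its first letter determines that letter.
-/

namespace List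

variable {α : Type*}

theorem exists_append_cons_of_ne_of_length_eq {A B : List α} (hlen : A.length = B.length)
    (hne : A ≠ B) : ∃ P a b A' B', a ≠ b ∧ A = P ++ a :: A' ∧ B = P ++ b :: B' := by
  induction A generalizing B with
  | nil => cases B <;> simp_all
  | cons a A ih =>
    cases B with
    | nil => simp at hlen
    | cons b B =>
      by_cases hab : a = b
      · subst hab
        obtain ⟨P, a', b', A', B', hne', rfl, rfl⟩ :=
          ih (by simpa using hlen) (by simpa using hne)
        exact ⟨a :: P, a', b', A', B', hne', rfl, rfl⟩
      · exact ⟨[], a, b, A, B, hab, rfl, rfl⟩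

variable [LinearOrder α]

def firstOccLT (A : List α) (a b : α) : Prop :=
  toLex (A.idxOf a, a) < toLex (A.idxOf b, b)

instance (A : List α) : IsStrictTotalOrder α (firstOccLT A) :=
  letI := LinearOrder.lift' (fun a => toLex (A.idxOf a, a)) fun _ _ h => (Prod.ext_iff.mp h).2
  inferInstanceAs (IsStrictTotalOrder α (· < ·))

theorem lex_firstOccLT {A B : List α} {ℓ : ℕ} (hlen : A.length = B.length)
    (hA : (A.take ℓ).Nodup) (hB : (B.take ℓ).Nodup) (hne : A.take ℓ ≠ B.take ℓ) :
    Lex (firstOccLT A) A B := by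
  obtain ⟨P, a, b, A', B', hab, hPA, hPB⟩ :=
    exists_append_cons_of_ne_of_length_eq (by simp [hlen]) hne
  have haP : a ∉ P := fun h => by rw [hPA, nodup_append] at hA; exact hA.2.2 a h a (by simp) rfl
  have hbP : b ∉ P := fun h => by rw [hPB, nodup_append] at hB; exact hB.2.2 b h b (by simp) rfl
  have hA' : A = P ++ a :: (A' ++ A.drop ℓ) := by
    conv_lhs => rw [← take_append_drop ℓ A, hPA]
    simp
  have hB' : B = P ++ b :: (B' ++ B.drop ℓ) := by
    conv_lhs => rw [← take_append_drop ℓ B, hPB]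
    simp
  have hr : firstOccLT A a b := by
    refine Prod.Lex.toLex_lt_toLex.mpr (Or.inl ?_)
    rw [hA', idxOf_append_of_notMem haP, idxOf_append_of_notMem hbP, idxOf_cons_self,
      idxOf_cons_ne _ hab]
    simp
  rw [hB']
  nth_rw 2 [hA']
  exact Lex.append_left _ (Lex.rel hr) P

end List

theorem IsConjugate.exists_eq_rotate {α : Type*} {w v : List α} (h : IsConjugate w v) :
    ∃ k, v = w.rotate k := by
  obtain ⟨w₁, w₂, rfl, rfl⟩ := h
  exact ⟨w₁.length, (List.rotate_append_length_eq w₁ w₂).symm⟩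

theorem isLyndon_rotate {n ℓ : ℕ} {w : List (Fin n)}
    (hnodup : ∀ k, ((w.rotate k).take ℓ).Nodup)
    (hmodEq : ∀ k k', (w.rotate k).take ℓ = (w.rotate k').take ℓ → k ≡ k' [MOD w.length])
    (k : ℕ) : IsLyndon (w.rotate k) := by
  refine ⟨List.firstOccLT (w.rotate k), inferInstance, fun v₁ v₂ hv hv₁ hv₂ => ?_⟩
  have hlen : v₁.length + v₂.length = w.length := by
    rw [← List.length_append, ← hv, List.length_rotate]
  rw [← List.rotate_append_length_eq, ← hv, List.rotate_rotate]
  refine List.lex_firstOccLT (by simp) (hnodup k) (hnodup _) fun h => ?_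
  have h₀ : v₁.length ≡ 0 [MOD w.length] := Nat.ModEq.add_left_cancel' k (hmodEq _ _ h).symm
  rw [Nat.ModEq, Nat.mod_eq_of_lt (by have := List.length_pos_of_ne_nil hv₂; omega),
    Nat.zero_mod] at h₀
  exact hv₁ (List.length_eq_zero_iff.mp h₀)

/-- `u`, read with period `N`, is a shorthand universal cycle for the permutations of `Fin (m + 1)`:
its windows of length `m` consist of distinct letters and determine their position modulo `N`. -/
structure IsShorthandUCycle {m : ℕ} (u : ℕ → Fin (m + 1)) (N : ℕ) : Prop where
  periodic : Function.Periodic u N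
  eq_of_apply_eq : ∀ a b, a < b + m → b < a + m → u a = u b → a = b
  modEq_of_window_eq : ∀ p q, (∀ s < m, u (p + s) = u (q + s)) → p ≡ q [MOD N]

namespace ShorthandUCycle

variable {m N : ℕ} (u : ℕ → Fin (m + 1))

noncomputable def missing (i : ℕ) : Fin (m + 1) :=
  Classical.epsilon fun a => ∀ s < m, u (i + s) ≠ a

/-- Block `i` of `extend u`, at positions `(m + 2) * i + x` for `x ≤ m + 1`, is the window of `u`
at `i`, then the letter this window misses, then the new letter `Fin.last (m + 1)`. -/
noncomputable def extend (j : ℕ) : Fin (m + 2) :=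
  if j % (m + 2) < m then (u (j / (m + 2) + j % (m + 2))).castSucc
  else if j % (m + 2) = m then (missing u (j / (m + 2))).castSucc
  else Fin.last (m + 1)

theorem apply_ne_missing (i : ℕ) {s : ℕ} (hs : s < m) : u (i + s) ≠ missing u i := by
  refine Classical.epsilon_spec (p := fun a => ∀ s < m, u (i + s) ≠ a) ?_ s hs
  by_contra! h
  have hsurj : Function.Surjective fun s : Fin m => u (i + s) := fun a =>
    let ⟨s, hs, hsa⟩ := h a; ⟨⟨s, hs⟩, hsa⟩
  simpa using Fintype.card_le_of_surjective _ hsurj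

theorem extend_mul_add (i : ℕ) {x : ℕ} (hx : x < 2 * m + 2) :
    extend u ((m + 2) * i + x) =
      if x < m then (u (i + x)).castSucc
      else if x = m then (missing u i).castSucc
      else if x = m + 1 then Fin.last (m + 1)
      else (u (i + (x - (m + 1)))).castSucc := by
  rcases lt_or_ge x (m + 2) with hx' | hx'
  · simp only [extend, Nat.mul_add_div (by omega : 0 < m + 2), Nat.mul_add_mod,
      Nat.div_eq_of_lt hx', Nat.mod_eq_of_lt hx', add_zero]
    split_ifs <;> first | rfl | omega
  · have hy : x - (m + 2) < m + 2 := by omega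
    rw [show (m + 2) * i + x = (m + 2) * (i + 1) + (x - (m + 2)) by rw [mul_add]; omega]
    simp only [extend, Nat.mul_add_div (by omega : 0 < m + 2), Nat.mul_add_mod,
      Nat.div_eq_of_lt hy, Nat.mod_eq_of_lt hy, add_zero]
    rw [if_pos (by omega), if_neg (by omega), if_neg (by omega), if_neg (by omega),
      show i + 1 + (x - (m + 2)) = i + (x - (m + 1)) by omega]

theorem extend_mul_add_of_lt (i : ℕ) {x : ℕ} (hx : x < m) :
    extend u ((m + 2) * i + x) = (u (i + x)).castSucc := by
  rw [extend_mul_add u i (by omega), if_pos hx]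

theorem extend_mul_add_self (i : ℕ) : extend u ((m + 2) * i + m) = (missing u i).castSucc := by
  rw [extend_mul_add u i (by omega), if_neg (lt_irrefl m), if_pos rfl]

theorem extend_mul_add_of_gt (i : ℕ) {x : ℕ} (hx : m + 1 < x) (hx' : x < 2 * m + 2) :
    extend u ((m + 2) * i + x) = (u (i + (x - (m + 1)))).castSucc := by
  rw [extend_mul_add u i hx', if_neg (by omega), if_neg (by omega), if_neg (by omega)]

theorem extend_mul_add_eq_last_iff (i : ℕ) {x : ℕ} (hx : x < 2 * m + 2) :
    extend u ((m + 2) * i + x) = Fin.last (m + 1) ↔ x = m + 1 := by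
  rw [extend_mul_add u i hx]
  split_ifs <;> simp only [Fin.castSucc_ne_last, true_iff, false_iff] <;> omega

variable {u}

theorem missing_add (hper : Function.Periodic u N) (i : ℕ) : missing u (i + N) = missing u i := by
  simp only [missing, add_right_comm i N, hper _]

theorem apply_eq_of_missing_eq (hu : IsShorthandUCycle u N) (hm : 0 < m) {i i' : ℕ}
    (h : ∀ z, 0 < z → z < m → u (i + z) = u (i' + z))
    (hmissing : missing u i = missing u i') :
    u i = u i' := by
  let perm : Fin (m + 1) → Fin (m + 1) := Fin.lastCases (missing u i') fun s => u (i' + s)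
  have hperm : Function.Injective perm := by
    intro y y' hyy'
    cases y using Fin.lastCases <;> cases y' using Fin.lastCases <;>
      simp only [perm, Fin.lastCases_last, Fin.lastCases_castSucc] at hyy'
    · rfl
    · exact absurd hyy'.symm (apply_ne_missing u _ (Fin.is_lt _))
    · exact absurd hyy' (apply_ne_missing u _ (Fin.is_lt _))
    · rename_i s s'
      have := hu.eq_of_apply_eq _ _ (by omega) (by omega) hyy'
      exact congrArg Fin.castSucc (Fin.ext (by omega))
  obtain ⟨y, hy⟩ := Finite.injective_iff_surjective.mp hperm (u i)
  cases y using Fin.lastCases with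
  | last =>
    simp only [perm, Fin.lastCases_last, ← hmissing] at hy
    exact absurd hy.symm (by simpa using apply_ne_missing u i hm)
  | cast s =>
    simp only [perm, Fin.lastCases_castSucc] at hy
    obtain hs | hs := Nat.eq_zero_or_pos (s : ℕ)
    · simpa [hs] using hy.symm
    · rw [← h s hs s.is_lt] at hy
      have := hu.eq_of_apply_eq _ _ (by omega) (by omega) hy
      omega

theorem periodic_extend (hper : Function.Periodic u N) :
    Function.Periodic (extend u) ((m + 2) * N) := by
  intro j
  simp only [extend, Nat.add_mul_div_left _ _ (by omega : 0 < m + 2), Nat.add_mul_mod_self_left,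
    add_right_comm _ N, hper _, missing_add hper]

theorem eq_of_extend_eq (hu : IsShorthandUCycle u N) {a b : ℕ} (hab : a ≤ b)
    (hba : b < a + (m + 1)) (h : extend u a = extend u b) : a = b := by
  obtain ⟨i, x, hx, rfl⟩ : ∃ i x, x < m + 2 ∧ a = (m + 2) * i + x :=
    ⟨a / (m + 2), a % (m + 2), Nat.mod_lt _ (by omega), (Nat.div_add_mod a (m + 2)).symm⟩
  obtain ⟨y, hxy, rfl⟩ : ∃ y, x ≤ y ∧ b = (m + 2) * i + y :=
    ⟨x + (b - ((m + 2) * i + x)), by omega, by omega⟩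
  rw [extend_mul_add u i (by omega), extend_mul_add u i (by omega)] at h
  suffices x = y by rw [this]
  -- The letters of `u` seen at offsets `x < y ≤ x + m` lie less than `m` apart in `u`, and the
  -- missing letter at offset `m` differs from those of `u` at the other offsets of the window.
  split_ifs at h <;>
    simp only [Fin.castSucc_inj, Fin.castSucc_ne_last, (Fin.castSucc_ne_last _).symm] at h
  all_goals first
    | omega
    | exact absurd h (apply_ne_missing u i (by omega))
    | exact absurd h.symm (apply_ne_missing u i (by omega))
    | (have := hu.eq_of_apply_eq _ _ (by omega) (by omega) h; omega)

theorem modEq_of_extend_window_eq (hu : IsShorthandUCycle u N) {p q : ℕ}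
    (h : ∀ s < m + 1, extend u (p + s) = extend u (q + s)) : p ≡ q [MOD (m + 2) * N] := by
  obtain ⟨i, x, hx, rfl⟩ : ∃ i x, x < m + 2 ∧ p = (m + 2) * i + x :=
    ⟨p / (m + 2), p % (m + 2), Nat.mod_lt _ (by omega), (Nat.div_add_mod p (m + 2)).symm⟩
  obtain ⟨i', x', hx', rfl⟩ : ∃ i x, x < m + 2 ∧ q = (m + 2) * i + x :=
    ⟨q / (m + 2), q % (m + 2), Nat.mod_lt _ (by omega), (Nat.div_add_mod q (m + 2)).symm⟩
  simp only [add_assoc] at h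
  obtain rfl : x = x' := by
    have hlast : ∀ s < m + 1, x + s = m + 1 ↔ x' + s = m + 1 := fun s hs => by
      rw [← extend_mul_add_eq_last_iff u i (by omega),
        ← extend_mul_add_eq_last_iff u i' (by omega), h s hs]
    by_contra hne
    rcases Nat.lt_or_gt_of_ne hne with hlt | hlt
    · have := (hlast (m + 1 - x') (by omega)).mpr (by omega); omega
    · have := (hlast (m + 1 - x) (by omega)).mp (by omega); omega
  suffices i ≡ i' [MOD N] from (this.mul_left' (m + 2)).add_right x
  have hval : ∀ y, x ≤ y → y ≤ x + m →
      extend u ((m + 2) * i + y) = extend u ((m + 2) * i' + y) :=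
    fun y h₁ h₂ => by simpa only [Nat.add_sub_cancel' h₁] using h (y - x) (by omega)
  have hlow : ∀ z, x ≤ z → z < m → u (i + z) = u (i' + z) := fun z h₁ h₂ => by
    have := hval z h₁ (by omega)
    rwa [extend_mul_add_of_lt u i h₂, extend_mul_add_of_lt u i' h₂, Fin.castSucc_inj] at this
  have hhigh : ∀ z, 0 < z → z < x → u (i + z) = u (i' + z) := fun z h₁ h₂ => by
    have := hval (z + (m + 1)) (by omega) (by omega)
    rwa [extend_mul_add_of_gt u i (by omega) (by omega),
      extend_mul_add_of_gt u i' (by omega) (by omega), Nat.add_sub_cancel, Fin.castSucc_inj] at this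
  rcases Nat.lt_or_ge x (m + 1) with hxm | hxm
  · refine hu.modEq_of_window_eq i i' fun z hz => ?_
    rcases Nat.lt_or_ge z x with hzx | hzx
    · rcases Nat.eq_zero_or_pos z with rfl | hz₀
      · rw [add_zero, add_zero]
        refine apply_eq_of_missing_eq hu (by omega) (fun z h₁ h₂ => ?_) ?_
        · exact (Nat.lt_or_ge z x).elim (hhigh z h₁) (hlow z · h₂)
        · have := hval m (by omega) (by omega)
          rwa [extend_mul_add_self, extend_mul_add_self, Fin.castSucc_inj] at this
      · exact hhigh z hz₀ hzx
    · exact hlow z hzx hz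
  · refine Nat.ModEq.add_right_cancel' 1 (hu.modEq_of_window_eq _ _ fun s hs => ?_)
    simpa only [add_assoc, add_comm 1] using hhigh (s + 1) (by omega) (by omega)

theorem _root_.IsShorthandUCycle.extend (hu : IsShorthandUCycle u N) :
    IsShorthandUCycle (extend u) ((m + 2) * N) where
  periodic := periodic_extend hu.periodic
  eq_of_apply_eq a b hab hba h := (le_total a b).elim
    (fun hle => eq_of_extend_eq hu hle hba h)
    (fun hle => (eq_of_extend_eq hu hle hab h.symm).symm)
  modEq_of_window_eq _ _ := modEq_of_extend_window_eq hu

end ShorthandUCycle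

noncomputable def shorthandUCycle : (m : ℕ) → ℕ → Fin (m + 1)
  | 0 => fun _ => 0
  | m + 1 => ShorthandUCycle.extend (shorthandUCycle m)

theorem isShorthandUCycle_shorthandUCycle :
    ∀ m, IsShorthandUCycle (shorthandUCycle m) (m + 1).factorial
  | 0 => ⟨fun _ => rfl, fun _ _ h₁ h₂ _ => by omega, fun _ _ _ => Nat.modEq_one⟩
  | m + 1 => by
    rw [Nat.factorial_succ]
    exact (isShorthandUCycle_shorthandUCycle m).extend

namespace IsShorthandUCycle

variable {m N : ℕ} {u : ℕ → Fin (m + 1)}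

theorem take_rotate_ofFn (hu : IsShorthandUCycle u N) (hmN : m ≤ N) (k : ℕ) :
    ((List.ofFn fun j : Fin N => u j).rotate k).take m =
      List.ofFn fun s : Fin m => u (k + s) := by
  refine List.ext_getElem (by simp [hmN]) fun s h₁ h₂ => ?_
  simp [List.getElem_rotate, hu.periodic.map_mod_nat, add_comm]

theorem nodup_take_rotate_ofFn (hu : IsShorthandUCycle u N) (hmN : m ≤ N) (k : ℕ) :
    (((List.ofFn fun j : Fin N => u j).rotate k).take m).Nodup := by
  rw [hu.take_rotate_ofFn hmN, List.nodup_ofFn]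
  intro s t h
  have := hu.eq_of_apply_eq _ _ (by omega) (by omega) h
  exact Fin.ext (by omega)

theorem modEq_of_take_rotate_ofFn_eq (hu : IsShorthandUCycle u N) (hmN : m ≤ N) {k k' : ℕ}
    (h : ((List.ofFn fun j : Fin N => u j).rotate k).take m =
      ((List.ofFn fun j : Fin N => u j).rotate k').take m) : k ≡ k' [MOD N] := by
  rw [hu.take_rotate_ofFn hmN, hu.take_rotate_ofFn hmN, List.ofFn_inj, funext_iff] at h
  exact hu.modEq_of_window_eq k k' fun s hs => h ⟨s, hs⟩

end IsShorthandUCycle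

/-- There exist universal Lyndon words of degree `n` for every `n > 0`. -/
theorem stmt_1 (n : ℕ) (hn : 0 < n) : ∃ w : List (Fin n), IsULW n w := by
  obtain ⟨m, rfl⟩ : ∃ m, n = m + 1 := ⟨n - 1, by omega⟩
  have hu := isShorthandUCycle_shorthandUCycle m
  have hmN : m ≤ (m + 1).factorial := (Nat.le_succ m).trans (Nat.self_le_factorial _)
  refine ⟨List.ofFn fun j : Fin (m + 1).factorial => shorthandUCycle m j, List.length_ofFn,
    fun v hv => ?_⟩
  obtain ⟨k, rfl⟩ := hv.exists_eq_rotate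
  refine isLyndon_rotate (hu.nodup_take_rotate_ofFn hmN) (fun k k' h => ?_) k
  simpa using hu.modEq_of_take_rotate_ofFn_eq hmN h
end

section
/- A universal Lyndon word is cyclically square-free: no word of the form uu with u nonempty occurs as a cyclic factor of a universal Lyndon word. -/
/-!
If `uu` were a cyclic factor of `w`, some conjugate of `w` would begin with `uu`, and rotating it
gives a conjugate of the form `usu`, which must be Lyndon. But a Lyndon word has no border:
for `w = usu`, comparing `w` with its rotations `suu` and `uus` gives `us ≤ su` and `su < us`.
-/

namespace List

variable {α : Type*} {r : α → α → Prop}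

theorem lex_append_left_iff [Std.Irrefl r] {t₁ t₂ : List α} :
    ∀ s : List α, Lex r (s ++ t₁) (s ++ t₂) ↔ Lex r t₁ t₂
  | [] => Iff.rfl
  | a :: s => by rw [cons_append, cons_append, lex_cons_iff, lex_append_left_iff s]

theorem Lex.append_of_length_eq {x y : List α} (hxy : Lex r x y) (hlen : x.length = y.length)
    (c d : List α) : Lex r (x ++ c) (y ++ d) := by
  induction hxy with
  | nil => simp at hlen
  | cons _ ih => exact .cons (ih (by simpa using hlen))
  | rel h => exact .rel h

end List

section Conjugate

variable {α : Type*}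

theorem IsConjugate.trans {w v v' : List α} (h₁ : IsConjugate w v) (h₂ : IsConjugate v v') :
    IsConjugate w v' := by
  obtain ⟨a, b, rfl, rfl⟩ := h₁
  obtain ⟨c, d, hbac, rfl⟩ := h₂
  rcases List.append_eq_append_iff.mp hbac with ⟨m, rfl, rfl⟩ | ⟨m, rfl, rfl⟩
  · exact ⟨m, d ++ b, by simp, by simp⟩
  · exact ⟨a ++ c, m, by simp, by simp⟩

theorem IsCyclicFactor.exists_isConjugate_prefix {w x : List α} (h : IsCyclicFactor w x) :
    ∃ v, IsConjugate w v ∧ x <+: v := by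
  obtain ⟨⟨p, t, hpxt⟩, hlen⟩ := h
  rw [List.append_assoc] at hpxt
  rcases List.append_eq_append_iff.mp hpxt with ⟨m, rfl, hxt⟩ | ⟨m, rfl, rfl⟩
  · have hx : x <+: m ++ p ++ m := ⟨t, by rw [hxt, List.append_assoc]⟩
    refine ⟨m ++ p, ⟨p, m, rfl, rfl⟩, List.prefix_of_prefix_length_le hx ?_ ?_⟩
    · exact List.prefix_append (m ++ p) m
    · simpa [add_comm] using hlen
  · exact ⟨x ++ t ++ m, ⟨m, x ++ t, rfl, rfl⟩, by simp⟩

end Conjugate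

theorem IsLyndonWith.ne_append_append {n : ℕ} {r : Fin n → Fin n → Prop} [IsStrictOrder (Fin n) r]
    {w : List (Fin n)} (hw : IsLyndonWith r w) {u : List (Fin n)} (hu : u ≠ [])
    (s : List (Fin n)) : w ≠ u ++ s ++ u := by
  rintro rfl
  have hsu : s ++ u ≠ [] := by simp [hu]
  have hus : u ++ s ≠ [] := by simp [hu]
  have h_lt_suu : List.Lex r (u ++ s ++ u) (s ++ u ++ u) := by
    simpa using hw u (s ++ u) (by simp) hu hsu
  have h_su_lt_us : List.Lex r (s ++ u) (u ++ s) := by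
    have h := hw (u ++ s) u rfl hus hu
    rwa [List.append_assoc, List.lex_append_left_iff] at h
  exact asymm h_lt_suu (h_su_lt_us.append_of_length_eq (by simp [add_comm]) u u)

theorem IsLyndon.ne_append_append {n : ℕ} {w : List (Fin n)} (hw : IsLyndon w)
    {u : List (Fin n)} (hu : u ≠ []) (s : List (Fin n)) : w ≠ u ++ s ++ u :=
  let ⟨_, _, hr⟩ := hw
  hr.ne_append_append hu s

/-- A universal Lyndon word is cyclically square-free: no word `uu` with `u` nonempty
occurs as a cyclic factor of a universal Lyndon word. -/
theorem stmt_3 (n : ℕ) (w : List (Fin n)) (hw : IsULW n w)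
    (u : List (Fin n)) (hu : u ≠ []) :
    ¬ IsCyclicFactor w (u ++ u) := by
  intro hcf
  obtain ⟨_, hwv, s, rfl⟩ := hcf.exists_isConjugate_prefix
  have hconj : IsConjugate w (u ++ s ++ u) := hwv.trans ⟨u, u ++ s, by simp, by simp⟩
  exact (hw.2 _ hconj).ne_append_append hu s rfl
end

section
/- Let w be a universal Lyndon word of degree n. Then for every total order < on Σ_n there is exactly one conjugate of w that is a Lyndon word with respect to <, and every conjugate of w is a Lyndon word with respect to exactly one total order on Σ_n. -/
/-! Two distinct conjugates of `w` that are Lyndon for the same order would each be smaller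
than the other, so every order has at most one Lyndon conjugate of `w`. A Lyndon word is
primitive, so `w` has `|w| = n!` distinct conjugates, and choosing for each of them an order
for which it is Lyndon injects them into the strict total orders on `Σ_n`. There are at most
`n!` of those (an order is determined by its rank function, an injection `Σ_n → Fin n`), so the
injection is a bijection, which gives both claims. -/

open List Finset

theorem existsUnique_of_card_le {A B : Type*} [Finite B] (L : A → B → Prop)
    (hcard : Nat.card B ≤ Nat.card A) (hex : ∀ a, ∃ b, L a b)
    (hinj : ∀ a₁ a₂ b, L a₁ b → L a₂ b → a₁ = a₂) :
    (∀ b, ∃! a, L a b) ∧ ∀ a, ∃! b, L a b := by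
  choose f hf using hex
  have hbij : f.Bijective :=
    Function.Injective.bijective_of_nat_card_le
      (fun a₁ a₂ h => hinj a₁ a₂ (f a₂) (h ▸ hf a₁) (hf a₂)) hcard
  refine ⟨fun b => ?_, fun a => ⟨f a, hf a, fun b hb => ?_⟩⟩
  · obtain ⟨a, rfl⟩ := hbij.2 b
    exact ⟨a, hf a, fun a' ha' => hinj a' a (f a) ha' (hf a)⟩
  · obtain ⟨a', rfl⟩ := hbij.2 b
    rw [hinj a a' (f a') hb (hf a')]

section StrictTotalOrder

variable {α : Type*} [Fintype α] {r : α → α → Prop} [IsStrictTotalOrder α r]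

open Classical in
theorem card_filter_rel_lt_of_rel {x y : α} (h : r x y) : #{z | r z x} < #{z | r z y} := by
  refine card_lt_card ((ssubset_iff_of_subset fun z hz => ?_).2 ⟨x, ?_, ?_⟩)
  · simp only [Finset.mem_filter, Finset.mem_univ, true_and] at hz ⊢
    exact _root_.trans hz h
  · simpa using h
  · simpa using irrefl x

variable (r) in
open Classical in
noncomputable def rankEmbedding : α ↪ Fin (Fintype.card α) where
  toFun x := ⟨#{z | r z x}, card_lt_univ_of_notMem (x := x) (by simp [irrefl])⟩
  inj' x y h := by
    simp only [Fin.mk.injEq] at h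
    rcases trichotomous_of r x y with hxy | rfl | hyx
    · exact absurd h (card_filter_rel_lt_of_rel hxy).ne
    · rfl
    · exact absurd h (card_filter_rel_lt_of_rel hyx).ne'

theorem rankEmbedding_lt_iff {x y : α} : rankEmbedding r x < rankEmbedding r y ↔ r x y := by
  refine ⟨fun h => ?_, card_filter_rel_lt_of_rel⟩
  rcases trichotomous_of r x y with hxy | rfl | hyx
  · exact hxy
  · exact absurd h (lt_irrefl _)
  · exact absurd h (card_filter_rel_lt_of_rel hyx).not_gt

end StrictTotalOrder

theorem card_isStrictTotalOrder_le (α : Type*) [Fintype α] :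
    Nat.card {r : α → α → Prop // IsStrictTotalOrder α r} ≤ (Fintype.card α).factorial := by
  have hinj : Function.Injective fun r : {r : α → α → Prop // IsStrictTotalOrder α r} =>
      @rankEmbedding α _ r.1 r.2 := by
    rintro ⟨r, hr⟩ ⟨s, hs⟩ h
    simp only at h
    refine Subtype.ext (funext₂ fun x y => propext ?_)
    change r x y ↔ s x y
    rw [← @rankEmbedding_lt_iff α _ r hr, ← @rankEmbedding_lt_iff α _ s hs, h]
  calc _ ≤ Nat.card (α ↪ Fin (Fintype.card α)) := Nat.card_le_card_of_injective _ hinj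
    _ = (Fintype.card α).factorial := by
      rw [Nat.card_eq_fintype_card, Fintype.card_embedding_eq, Fintype.card_fin,
        Nat.descFactorial_self]

theorem isConjugate_iff_isRotated {α : Type*} {w v : List α} : IsConjugate w v ↔ w ~r v := by
  constructor
  · rintro ⟨w₁, w₂, rfl, rfl⟩
    exact isRotated_append
  · rintro ⟨k, rfl⟩
    exact ⟨w.take (k % w.length), w.drop (k % w.length), (take_append_drop _ _).symm,
      rotate_eq_drop_append_take_mod⟩

namespace IsLyndonWith

variable {n : ℕ} {r : Fin n → Fin n → Prop} {u v : List (Fin n)}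

theorem lex_rotate (h : IsLyndonWith r u) {k : ℕ} (hk₀ : 0 < k) (hk : k < u.length) :
    Lex r u (u.rotate k) := by
  rw [rotate_eq_drop_append_take hk.le]
  exact h _ _ (take_append_drop k u).symm
    (ne_nil_of_length_pos (by rw [length_take]; omega))
    (ne_nil_of_length_pos (by rw [length_drop]; omega))

theorem lex_of_isRotated (h : IsLyndonWith r u) (huv : u ~r v) (hne : u ≠ v) : Lex r u v := by
  obtain ⟨k, rfl⟩ := huv
  rw [← rotate_mod] at hne ⊢
  have hu : 0 < u.length := length_pos_iff.2 fun hu => hne (by simp [hu])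
  refine h.lex_rotate (Nat.pos_of_ne_zero fun hk => hne ?_) (Nat.mod_lt _ hu)
  rw [hk, rotate_zero]

theorem eq_of_isRotated [Std.Asymm r] (hu : IsLyndonWith r u) (hv : IsLyndonWith r v)
    (huv : u ~r v) : u = v := by
  by_contra hne
  exact asymm (hu.lex_of_isRotated huv hne) (hv.lex_of_isRotated huv.symm (Ne.symm hne))

theorem eq_of_rotate_eq [Std.Asymm r] (h : IsLyndonWith r u) {i j : ℕ} (hi : i < u.length)
    (hj : j < u.length) (hij : u.rotate i = u.rotate j) : i = j := by
  wlog hlt : i < j generalizing i j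
  · rcases (not_lt.1 hlt).lt_or_eq with hji | hji
    · exact (this hj hi hij.symm hji).symm
    · exact hji.symm
  have hperiod : u.rotate (j - i) = u := by
    calc u.rotate (j - i) = u.rotate (j + (u.length - i)) := by
          rw [← rotate_mod u (j + _), show j + (u.length - i) = j - i + u.length by omega,
            Nat.add_mod_right, Nat.mod_eq_of_lt (by omega)]
      _ = u.rotate (i + (u.length - i)) := by rw [← rotate_rotate, ← hij, rotate_rotate]
      _ = u := by rw [Nat.add_sub_cancel' hi.le, rotate_length]
  have := h.lex_rotate (k := j - i) (by omega) (by omega)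
  rw [hperiod] at this
  exact absurd this (irrefl _)

theorem card_conjugates [Std.Asymm r] (h : IsLyndonWith r u) (hu : u ≠ []) :
    Nat.card {v // IsConjugate u v} = u.length := by
  let f : Fin u.length → {v // IsConjugate u v} :=
    fun i => ⟨u.rotate i, isConjugate_iff_isRotated.2 ⟨i, rfl⟩⟩
  have hf : f.Bijective := by
    refine ⟨fun i j hij => Fin.ext (h.eq_of_rotate_eq i.2 j.2 (congrArg Subtype.val hij)), ?_⟩
    rintro ⟨v, hv⟩
    obtain ⟨k, rfl⟩ := isConjugate_iff_isRotated.1 hv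
    exact ⟨⟨k % u.length, Nat.mod_lt _ (length_pos_iff.2 hu)⟩, Subtype.ext (rotate_mod u k)⟩
  rw [← Nat.card_congr (Equiv.ofBijective f hf), Nat.card_fin]

end IsLyndonWith

/-- For a universal Lyndon word `w` of degree `n` : every total order on `Σ_n` has exactly
one conjugate of `w` that is Lyndon with respect to it, and every conjugate of `w` is
Lyndon with respect to exactly one total order on `Σ_n`. -/
theorem stmt_4 (n : ℕ) (w : List (Fin n)) (hw : IsULW n w) :
    (∀ r : Fin n → Fin n → Prop, IsStrictTotalOrder (Fin n) r →
      ∃! v : List (Fin n), IsConjugate w v ∧ IsLyndonWith r v) ∧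
    (∀ v : List (Fin n), IsConjugate w v →
      ∃ r : Fin n → Fin n → Prop, IsStrictTotalOrder (Fin n) r ∧ IsLyndonWith r v ∧
        ∀ r' : Fin n → Fin n → Prop, IsStrictTotalOrder (Fin n) r' → IsLyndonWith r' v →
          r' = r) := by
  obtain ⟨hlen, hlyndon⟩ := hw
  have hne : w ≠ [] := ne_nil_of_length_pos (hlen ▸ n.factorial_pos)
  obtain ⟨r₀, hr₀, hw₀⟩ := hlyndon w (isConjugate_iff_isRotated.2 (IsRotated.refl w))
  have hcard :
      Nat.card {r // IsStrictTotalOrder (Fin n) r} ≤ Nat.card {v // IsConjugate w v} := by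
    rw [hw₀.card_conjugates hne, hlen]
    simpa using card_isStrictTotalOrder_le (Fin n)
  obtain ⟨horder, hconj⟩ := existsUnique_of_card_le
    (fun (v : {v // IsConjugate w v}) (r : {r // IsStrictTotalOrder (Fin n) r}) =>
      IsLyndonWith r.1 v.1) hcard
    (fun ⟨v, hv⟩ => by
      obtain ⟨r, hr, hvr⟩ := hlyndon v hv
      exact ⟨⟨r, hr⟩, hvr⟩)
    (fun ⟨v₁, hv₁⟩ ⟨v₂, hv₂⟩ ⟨r, hr⟩ h₁ h₂ => Subtype.ext <| h₁.eq_of_isRotated h₂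
      ((isConjugate_iff_isRotated.1 hv₁).symm.trans (isConjugate_iff_isRotated.1 hv₂)))
  refine ⟨fun r hr => ?_, fun v hv => ?_⟩
  · obtain ⟨⟨v, hv⟩, hvr, huniq⟩ := horder ⟨r, hr⟩
    exact ⟨v, ⟨hv, hvr⟩, fun v' ⟨hv', hv'r⟩ => congrArg Subtype.val (huniq ⟨v', hv'⟩ hv'r)⟩
  · obtain ⟨⟨r, hr⟩, hvr, huniq⟩ := hconj ⟨v, hv⟩
    exact ⟨r, hr, hvr, fun r' hr' hvr' => congrArg Subtype.val (huniq ⟨r', hr'⟩ hvr')⟩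
end

section
/- Let w be a universal Lyndon word of degree n and let u be a cyclic factor of w of length k > 0. Then for every total order < on Σ_n that extends the partial order ⊲_u defined by u, the word u is lexicographically (with respect to <) smaller than or equal to every cyclic factor of w of length k. -/
/-- The partial alphabet order `⊲_u` defined by the word `u` : `i ⊲_u j` iff `i` occurs
in `u` and either `j` does not occur in `u`, or the first occurrence of `i` in `u`
precedes the first occurrence of `j` in `u`. -/
def wordOrder {n : ℕ} (u : List (Fin n)) (i j : Fin n) : Prop :=
  i ∈ u ∧ u.idxOf i < u.idxOf j

namespace List

variable {α : Type*}

theorem lex_append_left_iff_s7 {r : α → α → Prop} (hirr : ∀ a, ¬ r a a) (p : List α)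
    {l₁ l₂ : List α} : Lex r (p ++ l₁) (p ++ l₂) ↔ Lex r l₁ l₂ := by
  induction p with
  | nil => rfl
  | cons a p ih => simp [cons_lex_cons_iff, hirr, ih]

theorem exists_eq_append_cons_of_length_eq_of_ne :
    ∀ {u v : List α}, u.length = v.length → u ≠ v →
      ∃ (p : List α) (a b : α) (u' v' : List α), u = p ++ a :: u' ∧ v = p ++ b :: v' ∧ a ≠ b
  | [], [], _, huv => absurd rfl huv
  | a :: u, b :: v, hlen, huv => by
    by_cases hab : a = b
    · subst hab
      obtain ⟨p, c, d, u', v', rfl, rfl, hcd⟩ :=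
        exists_eq_append_cons_of_length_eq_of_ne (by simpa using hlen) (by simpa using huv)
      exact ⟨a :: p, c, d, u', v', rfl, rfl, hcd⟩
    · exact ⟨[], a, b, u, v, rfl, rfl, hab⟩

end List

section CyclicFactor

variable {α : Type*} {w u : List α}

theorem isConjugate_of_isRotated {v : List α} (h : w ~r v) : IsConjugate w v := by
  obtain ⟨k, hk, rfl⟩ := List.isRotated_iff_mod.mp h
  exact ⟨w.take k, w.drop k, (List.take_append_drop k w).symm,
    List.rotate_eq_drop_append_take hk⟩

theorem IsCyclicFactor.of_infix {v : List α} (hu : IsCyclicFactor w u) (hvu : v <:+: u) :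
    IsCyclicFactor w v :=
  ⟨hvu.trans hu.1, hvu.length_le.trans hu.2⟩

theorem IsCyclicFactor.exists_isRotated_prefix (hu : IsCyclicFactor w u) :
    ∃ x, w ~r x ∧ u <+: x := by
  obtain ⟨hinf, hlen⟩ := hu
  obtain ⟨x, hux, s, hsx⟩ := List.infix_iff_prefix_suffix.mp hinf
  rcases List.append_eq_append_iff.mp hsx.symm with ⟨s', -, rfl⟩ | ⟨t, rfl, rfl⟩
  · exact ⟨x ++ s', List.isRotated_append, hux.trans (List.prefix_append x s')⟩
  · refine ⟨t ++ s, List.isRotated_append, List.prefix_of_prefix_length_le hux ?_ ?_⟩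
    · simp
    · simp only [List.length_append] at hlen ⊢; omega

end CyclicFactor

section Lyndon

variable {n : ℕ}

theorem IsLyndonWith.lex_of_isRotated_s7 {r : Fin n → Fin n → Prop} {x y : List (Fin n)}
    (hx : IsLyndonWith r x) (hxy : x ~r y) (hne : x ≠ y) : List.Lex r x y := by
  obtain ⟨k, hk, rfl⟩ := List.isRotated_iff_mod.mp hxy
  have hk0 : k ≠ 0 := by rintro rfl; exact hne x.rotate_zero.symm
  have hkx : k ≠ x.length := by rintro rfl; exact hne x.rotate_length.symm
  rw [List.rotate_eq_drop_append_take hk]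
  refine hx _ _ (List.take_append_drop k x).symm ?_ ?_
  · rw [Ne, List.take_eq_nil_iff]
    rintro (h | rfl)
    · exact hk0 h
    · exact hne rfl
  · rw [Ne, List.drop_eq_nil_iff]
    omega

theorem not_isCyclicFactor_of_forall_isLyndon {w : List (Fin n)}
    (hw : ∀ v, IsConjugate w v → IsLyndon v) {c d : Fin n} (hcd : c ≠ d) (q : List (Fin n))
    (hc : IsCyclicFactor w (d :: q ++ [c])) : ¬ IsCyclicFactor w (d :: q ++ [d]) := by
  intro hd
  obtain ⟨x, hwx, X, rfl⟩ := hc.exists_isRotated_prefix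
  obtain ⟨y, hwy, Y, rfl⟩ := hd.exists_isRotated_prefix
  obtain ⟨s, hs, hx⟩ := hw _ (isConjugate_of_isRotated hwx)
  simp only [List.append_assoc, List.singleton_append] at hx hwx hwy ⊢
  have hscd : s c d := by
    have hxy := hx.lex_of_isRotated_s7 (hwx.symm.trans hwy) (by simp [hcd])
    rw [List.lex_append_left_iff_s7 hs.irrefl, List.cons_lex_cons_iff] at hxy
    exact hxy.resolve_right (fun h => hcd h.1)
  have hsdc : s d c := by
    have hxc := hx (d :: q) (c :: X) rfl (by simp) (by simp)
    simp only [List.cons_append, List.cons_lex_cons_iff] at hxc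
    exact hxc.resolve_right (fun h => hcd h.1.symm)
  exact hs.irrefl c (hs.trans _ _ _ hscd hsdc)

end Lyndon

theorem wordOrder_append_cons {n : ℕ} {p u' : List (Fin n)} {c d : Fin n} (hdp : d ∉ p)
    (hcd : c ≠ d) : wordOrder (p ++ c :: u') c d := by
  refine ⟨by simp, ?_⟩
  rw [List.idxOf_append, List.idxOf_append, if_neg hdp, List.idxOf_cons_self,
    List.idxOf_cons_ne _ hcd]
  split_ifs with hcp
  · exact (List.idxOf_lt_length_of_mem hcp).trans (by omega)
  · omega

theorem stmt_7_general (n : ℕ) (w u : List (Fin n)) (hw : IsULW n w)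
    (hu : IsCyclicFactor w u)
    (r : Fin n → Fin n → Prop)
    (hext : ∀ i j : Fin n, wordOrder u i j → r i j) :
    ∀ v : List (Fin n), IsCyclicFactor w v → v.length = u.length →
      u = v ∨ List.Lex r u v := by
  intro v hv hlen
  by_cases huv : u = v
  · exact Or.inl huv
  obtain ⟨p, c, d, u', v', rfl, rfl, hcd⟩ :=
    List.exists_eq_append_cons_of_length_eq_of_ne hlen.symm huv
  have hdp : d ∉ p := by
    intro hdp
    obtain ⟨p₁, q, rfl⟩ := List.append_of_mem hdp
    refine not_isCyclicFactor_of_forall_isLyndon hw.2 hcd q ?_ ?_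
    · exact hu.of_infix ⟨p₁, u', by simp⟩
    · exact hv.of_infix ⟨p₁, v', by simp⟩
  exact Or.inr <| (List.Lex.rel <| hext c d <| wordOrder_append_cons hdp hcd).append_left _ p

/-- Corollary: let `w` be a ULW and `u` a nonempty cyclic factor of `w` of length `k`.
Then for every total order `r` on `Σ_n` extending `⊲_u`, the word `u` is lexicographically
(w.r.t. `r`) smaller than or equal to every cyclic factor of `w` of length `k`. -/
theorem stmt_7 (n : ℕ) (w u : List (Fin n)) (hw : IsULW n w)
    (hu : IsCyclicFactor w u) (hne : u ≠ [])
    (r : Fin n → Fin n → Prop) (hr : IsStrictTotalOrder (Fin n) r)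
    (hext : ∀ i j : Fin n, wordOrder u i j → r i j) :
    ∀ v : List (Fin n), IsCyclicFactor w v → v.length = u.length →
      u = v ∨ List.Lex r u v :=
  stmt_7_general n w u hw hu r hext
end

section
/- In a universal Lyndon word of degree n, every letter a ∈ Σ_n occurs exactly (n−1)! times. -/
/-!
Each position `i` of a universal Lyndon word `w` starts a Lyndon conjugate `w.rotate i`, whose
first letter `w[i]` is minimal among its letters for the witnessing order. Moving `w[i]` to the
bottom of that order keeps the conjugate Lyndon, so each position yields a total order on `Σ_n`,
i.e. a permutation `π` with `π 0 = w[i]`. Distinct conjugates cannot both be Lyndon for the same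
order (each would be smaller than the other), so this map from the `n!` positions to the `n!`
permutations is a bijection, and the positions carrying `a` correspond to the `(n-1)!`
permutations with `π 0 = a`.
-/

open Function Equiv Nat Finset

namespace List

variable {α : Type*}

theorem Lex.imp_of_mem {r s : α → α → Prop} {l₁ l₂ : List α}
    (H : ∀ a ∈ l₁, ∀ b ∈ l₂, r a b → s a b) (h : Lex r l₁ l₂) : Lex s l₁ l₂ := by
  induction h with
  | nil => exact .nil
  | cons _ ih =>
    exact .cons (ih fun a ha b hb => H a (mem_cons_of_mem _ ha) b (mem_cons_of_mem _ hb))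
  | rel h => exact .rel (H _ mem_cons_self _ mem_cons_self h)

theorem Lex.rel_of_ne {r : α → α → Prop} {a b : α} {l₁ l₂ : List α}
    (h : Lex r (a :: l₁) (b :: l₂)) (hab : a ≠ b) : r a b := by
  cases h with
  | cons => exact absurd rfl hab
  | rel h => exact h

theorem exists_rotate_eq_rotate_rotate {l : List α} {i j : ℕ} (hi : i < l.length)
    (hj : j < l.length) (hij : i ≠ j) :
    ∃ k, 0 < k ∧ k < l.length ∧ l.rotate j = (l.rotate i).rotate k := by
  rcases hij.lt_or_gt with hij | hij
  · exact ⟨j - i, by omega, by omega, by rw [rotate_rotate, Nat.add_sub_cancel' hij.le]⟩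
  · refine ⟨l.length - i + j, by omega, by omega, ?_⟩
    rw [rotate_rotate, ← Nat.add_assoc, Nat.add_sub_cancel' hi.le, ← rotate_rotate,
      rotate_length]

end List

theorem exists_equiv_fin_invImage_eq {α : Type*} [Fintype α] {m : ℕ}
    (hcard : Fintype.card α = m) (r : α → α → Prop) [IsStrictTotalOrder α r] :
    ∃ e : Fin m ≃ α, InvImage (· < ·) e.symm = r := by
  let : DecidableRel r := Classical.decRel r
  let : LinearOrder α := linearOrderOfSTO r
  refine ⟨(monoEquivOfFin α hcard).toEquiv, ?_⟩
  ext x y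
  exact (monoEquivOfFin α hcard).symm.lt_iff_lt

theorem card_filter_perm_apply_zero {m : ℕ} (a : Fin (m + 1)) :
    #{σ : Perm (Fin (m + 1)) | σ 0 = a} = m ! := by
  calc #{σ : Perm (Fin (m + 1)) | σ 0 = a}
      = #(({a} : Finset (Fin (m + 1))) ×ˢ (univ : Finset (Perm (Fin m)))) :=
        (card_equiv Perm.decomposeFin.symm fun ⟨b, τ⟩ => by simp [eq_comm]).symm
    _ = m ! := by simp [Fintype.card_perm]

section WithMin

variable {α : Type*} [DecidableEq α]

def withMin (r : α → α → Prop) (a : α) : α → α → Prop :=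
  InvImage (Prod.Lex (· < ·) r) fun x => (decide (x ≠ a), x)

instance (r : α → α → Prop) [IsStrictTotalOrder α r] (a : α) :
    IsStrictTotalOrder α (withMin r a) where
  toTrichotomous := InvImage.trichotomous fun _ _ h => (Prod.ext_iff.1 h).2
  irrefl _ := irrefl_of (Prod.Lex (· < ·) r) _
  trans _ _ _ := trans_of (Prod.Lex (· < ·) r)

theorem withMin_self {r : α → α → Prop} {a b : α} (hb : b ≠ a) : withMin r a a b := by
  simp [withMin, InvImage, Prod.lex_def, hb]

theorem withMin_of_rel {r : α → α → Prop} {a x y : α} (hy : y ≠ a) (hxy : r x y) :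
    withMin r a x y := by
  by_cases hx : x = a
  · subst hx; exact withMin_self hy
  · simp [withMin, InvImage, Prod.lex_def, hx, hy, hxy]

end WithMin

section Lyndon

variable {n : ℕ}

theorem IsLyndonWith.lex_rotate_s10 {r : Fin n → Fin n → Prop} {v : List (Fin n)}
    (hv : IsLyndonWith r v) {k : ℕ} (hk₀ : 0 < k) (hk : k < v.length) :
    List.Lex r v (v.rotate k) := by
  rw [List.rotate_eq_drop_append_take hk.le]
  exact hv _ _ (List.take_append_drop k v).symm
    (List.ne_nil_of_length_pos (by simp; omega)) (List.ne_nil_of_length_pos (by simp; omega))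

theorem IsLyndonWith.eq_of_rotate {r : Fin n → Fin n → Prop} [Std.Asymm r] {w : List (Fin n)}
    {i j : ℕ} (hi : i < w.length) (hj : j < w.length) (hri : IsLyndonWith r (w.rotate i))
    (hrj : IsLyndonWith r (w.rotate j)) : i = j := by
  by_contra hij
  obtain ⟨k, hk₀, hk, hijk⟩ := List.exists_rotate_eq_rotate_rotate hi hj hij
  obtain ⟨l, hl₀, hl, hjil⟩ := List.exists_rotate_eq_rotate_rotate hj hi (Ne.symm hij)
  have hlt : List.Lex r (w.rotate i) (w.rotate j) := by
    rw [hijk]; exact hri.lex_rotate_s10 hk₀ (by simpa using hk)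
  have hgt : List.Lex r (w.rotate j) (w.rotate i) := by
    rw [hjil]; exact hrj.lex_rotate_s10 hl₀ (by simpa using hl)
  exact asymm hlt hgt

theorem IsLyndonWith.rel_head {r : Fin n → Fin n → Prop} {a b : Fin n} {t : List (Fin n)}
    (hv : IsLyndonWith r (a :: t)) (hb : b ∈ t) (hba : b ≠ a) : r a b := by
  obtain ⟨p, q, rfl⟩ := List.append_of_mem hb
  exact (hv (a :: p) (b :: q) rfl (List.cons_ne_nil _ _) (List.cons_ne_nil _ _)).rel_of_ne
    hba.symm

theorem IsLyndonWith.withMin {r : Fin n → Fin n → Prop} [IsStrictTotalOrder (Fin n) r]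
    {a : Fin n} {t : List (Fin n)} (hv : IsLyndonWith r (a :: t)) :
    IsLyndonWith (withMin r a) (a :: t) := by
  -- `a` is `r`-below every other letter of the word, so `Lex` never meets it as the larger letter
  intro w₁ w₂ hsplit h₁ h₂
  refine (hv w₁ w₂ hsplit h₁ h₂).imp_of_mem fun x hx _ _ hxy => withMin_of_rel ?_ hxy
  rintro rfl
  have hx' : x ∈ t := (List.mem_cons.1 hx).resolve_left (by rintro rfl; exact irrefl _ hxy)
  exact asymm hxy (hv.rel_head hx' (by rintro rfl; exact irrefl _ hxy))

theorem exists_perm_apply_zero_of_forall_rel [NeZero n] {r : Fin n → Fin n → Prop}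
    [IsStrictTotalOrder (Fin n) r] {a : Fin n} (ha : ∀ b ≠ a, r a b) :
    ∃ π : Perm (Fin n), π 0 = a ∧ InvImage (· < ·) π.symm = r := by
  obtain ⟨π, rfl⟩ := exists_equiv_fin_invImage_eq (Fintype.card_fin n) r
  refine ⟨π, by_contra fun h => ?_, rfl⟩
  simpa [InvImage] using ha (π 0) h

theorem IsLyndon.exists_perm_apply_zero [NeZero n] {a : Fin n} {t : List (Fin n)}
    (hv : IsLyndon (a :: t)) :
    ∃ π : Perm (Fin n), π 0 = a ∧ IsLyndonWith (InvImage (· < ·) π.symm) (a :: t) := by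
  obtain ⟨r, _, hrv⟩ := hv
  obtain ⟨π, hπa, hπ⟩ := exists_perm_apply_zero_of_forall_rel
    (r := withMin r a) fun _ => withMin_self
  exact ⟨π, hπa, hπ ▸ hrv.withMin⟩

theorem IsULW.exists_perm_apply_zero [NeZero n] {w : List (Fin n)} (hw : IsULW n w)
    (i : Fin w.length) :
    ∃ π : Perm (Fin n), π 0 = w[i] ∧ IsLyndonWith (InvImage (· < ·) π.symm) (w.rotate i) := by
  have hconj : IsConjugate w (w.rotate i) := ⟨w.take i, w.drop i,
    (List.take_append_drop _ _).symm, List.rotate_eq_drop_append_take i.isLt.le⟩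
  have hrot : w.rotate i = w[i] :: (w.drop (i + 1) ++ w.take i) := by
    rw [List.rotate_eq_drop_append_take i.isLt.le, List.drop_eq_getElem_cons i.isLt,
      List.cons_append, Fin.getElem_fin]
  rw [hrot] at hconj ⊢
  exact (hw.2 _ hconj).exists_perm_apply_zero

end Lyndon

/-- In a universal Lyndon word of degree `n`, every letter occurs exactly `(n-1)!` times. -/
theorem stmt_10 (n : ℕ) (w : List (Fin n)) (hw : IsULW n w) :
    ∀ a : Fin n, w.count a = Nat.factorial (n - 1) := by
  intro a
  obtain ⟨m, rfl⟩ := Nat.exists_eq_add_one_of_ne_zero a.pos.ne'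
  choose π hπa hπ using hw.exists_perm_apply_zero
  have hπ_bij : Bijective π := by
    refine (Fintype.bijective_iff_injective_and_card π).2
      ⟨fun i j hij => ?_, by simp [hw.1, Fintype.card_perm]⟩
    exact Fin.ext (IsLyndonWith.eq_of_rotate i.isLt j.isLt (hπ i) (hij ▸ hπ j))
  calc w.count a = #{i : Fin w.length | w[i] = a} :=
        (Fin.card_filter_univ_eq_vector_get_eq_count a ⟨w, rfl⟩).symm
    _ = #{σ : Perm (Fin (m + 1)) | σ 0 = a} := card_bijective π hπ_bij fun i => by simp [hπa]
    _ = m ! := card_filter_perm_apply_zero a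
end

section
/- If X is a lex-code of degree n containing a word of length greater than n!, then X is not Hamiltonian. -/
/-- `x` is the lexicographic minimum of `X` with respect to the letter order `r`. -/
def IsLexMinOf {n : ℕ} (r : Fin n → Fin n → Prop) (x : List (Fin n))
    (X : Set (List (Fin n))) : Prop :=
  x ∈ X ∧ ∀ y ∈ X, y ≠ x → List.Lex r x y

/-- A lex-code of degree `n` : a set of nonempty words over `Σ_n` such that (1) every
`x ∈ X` is the lexicographic minimum of `X` for exactly one total order on `Σ_n`, and
(2) every proper prefix of a word of `X` is a prefix of at least two distinct words of `X`. -/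
def IsLexCode (n : ℕ) (X : Set (List (Fin n))) : Prop :=
  (∀ x ∈ X, x ≠ []) ∧
  (∀ x ∈ X, ∃ r : Fin n → Fin n → Prop, IsStrictTotalOrder (Fin n) r ∧ IsLexMinOf r x X ∧
    ∀ r' : Fin n → Fin n → Prop, IsStrictTotalOrder (Fin n) r' → IsLexMinOf r' x X → r' = r) ∧
  (∀ x ∈ X, ∀ p : List (Fin n), p <+: x → p ≠ [] → p ≠ x →
    ∃ y ∈ X, ∃ z ∈ X, y ≠ z ∧ p <+: y ∧ p <+: z)

/-- The edge relation `S_X` : `(x, y)` is an edge iff `x` is a prefix of `ay`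
for some letter `a`. -/
def SX {n : ℕ} (X : Set (List (Fin n))) (x y : List (Fin n)) : Prop :=
  x ∈ X ∧ y ∈ X ∧ ∃ a : Fin n, x <+: a :: y

/-- The digraph of `S_X` on vertex set `X` has a Hamiltonian cycle: a cyclic sequence of
pairwise distinct vertices containing every element of `X`, in which every
(cyclically) consecutive pair is an edge of `S_X`. -/
def HasHamiltonianCycle {n : ℕ} (X : Set (List (Fin n))) : Prop :=
  ∃ c : List (List (Fin n)), c ≠ [] ∧ c.Nodup ∧ (∀ x, x ∈ c ↔ x ∈ X) ∧
    ∀ p ∈ c.zip (c.rotate 1), SX X p.1 p.2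

/-- A Hamiltonian lex-code. -/
def IsHamiltonianLexCode (n : ℕ) (X : Set (List (Fin n))) : Prop :=
  IsLexCode n X ∧ HasHamiltonianCycle X

/-!
A lex-code of degree `n` has at most `n!` words, because distinct words are lexicographic minima
for distinct total orders of `Σ_n`; and none of its words is a proper prefix of another, because a
proper prefix is lexicographically smaller for every order. Along a Hamiltonian cycle
`x₀ → x₁ → ⋯ → x_{N-1} → x₀`, with `N = |X| ≤ n!`, the tail of `xₖ` is a prefix of `xₖ₊₁`, so
`xₖ` is a prefix of the `N`-periodic infinite word `sₖ sₖ₊₁ ⋯` built from the first letters `sₖ`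
of the `xₖ`. Hence two vertices that agree on their first `N` letters are prefix-comparable. A word
of `X` longer than `n! ≥ N` has a proper prefix of length `N`, which must extend to two distinct
words of `X`: they are comparable, a contradiction.
-/

open Function Nat

theorem List.Lex.of_isPrefix_of_ne {α : Type*} {r : α → α → Prop} {l₁ l₂ : List α}
    (h : l₁ <+: l₂) (hne : l₁ ≠ l₂) : List.Lex r l₁ l₂ := by
  obtain ⟨t, rfl⟩ := h
  cases t with
  | nil => simp at hne
  | cons a t => simpa using List.Lex.append_left r (List.Lex.nil (a := a) (l := t)) l₁

theorem List.IsPrefix.tail_of_cons {α : Type*} {l m : List α} {a : α} (h : l <+: a :: m) :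
    l.tail <+: m := by
  rcases List.prefix_cons_iff.1 h with rfl | ⟨t, rfl, ht⟩
  exacts [List.nil_prefix, ht]

theorem List.isPrefix_or_isPrefix_of_getElem?_eq {α : Type*} {l₁ l₂ : List α}
    (h : ∀ i, i < l₁.length → i < l₂.length → l₁[i]? = l₂[i]?) : l₁ <+: l₂ ∨ l₂ <+: l₁ := by
  rcases le_total l₁.length l₂.length with hle | hle
  · refine .inl (List.prefix_iff_getElem?.2 fun i hi => ?_)
    rw [← h i hi (hi.trans_le hle), List.getElem?_eq_getElem hi]
  · refine .inr (List.prefix_iff_getElem?.2 fun i hi => ?_)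
    rw [h i (hi.trans_le hle) hi, List.getElem?_eq_getElem hi]

theorem exists_equiv_fin_lt_iff_of_isStrictTotalOrder {α : Type*} [Fintype α]
    (r : α → α → Prop) [IsStrictTotalOrder α r] :
    ∃ e : α ≃ Fin (Fintype.card α), ∀ a b, r a b ↔ e a < e b := by
  classical
  let := linearOrderOfSTO r
  exact ⟨(Fintype.orderIsoFinOfCardEq α rfl).symm.toEquiv,
    fun a b => (Fintype.orderIsoFinOfCardEq α rfl).symm.lt_iff_lt.symm⟩

theorem IsLexMinOf.eq {n : ℕ} {r : Fin n → Fin n → Prop} [Std.Asymm r] {X : Set (List (Fin n))}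
    {x y : List (Fin n)} (hx : IsLexMinOf r x X) (hy : IsLexMinOf r y X) : x = y := by
  by_contra hne
  exact asymm (hx.2 y hy.1 (Ne.symm hne)) (hy.2 x hx.1 hne)

namespace IsLexCode

variable {n : ℕ} {X : Set (List (Fin n))}

theorem eq_of_isPrefix (hX : IsLexCode n X) {x y : List (Fin n)} (hx : x ∈ X) (hy : y ∈ X)
    (h : x <+: y) : x = y := by
  by_contra hne
  obtain ⟨r, hr, hmin, -⟩ := hX.2.1 y hy
  exact asymm (hmin.2 x hx hne) (List.Lex.of_isPrefix_of_ne h hne)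

theorem exists_equiv_isLexMinOf (hX : IsLexCode n X) {x : List (Fin n)} (hx : x ∈ X) :
    ∃ e : Fin n ≃ Fin (Fintype.card (Fin n)), IsLexMinOf (fun a b => e a < e b) x X := by
  obtain ⟨r, hr, hmin, -⟩ := hX.2.1 x hx
  obtain ⟨e, he⟩ := exists_equiv_fin_lt_iff_of_isStrictTotalOrder r
  refine ⟨e, ?_⟩
  convert hmin
  exact (he _ _).symm

theorem encard_le_factorial (hX : IsLexCode n X) : X.encard ≤ n ! := by
  have : ∀ x, ∃ e : Fin n ≃ Fin (Fintype.card (Fin n)),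
      x ∈ X → IsLexMinOf (fun a b => e a < e b) x X := fun x => by
    by_cases hx : x ∈ X
    · obtain ⟨e, he⟩ := hX.exists_equiv_isLexMinOf hx
      exact ⟨e, fun _ => he⟩
    · exact ⟨Fintype.equivFin _, fun h => absurd h hx⟩
  choose e he using this
  have hinj : Set.InjOn e X := fun x hx y hy hxy =>
    (he x hx).eq (r := fun a b => e x a < e x b) (hxy ▸ he y hy)
  calc X.encard ≤ (Set.univ : Set (Fin n ≃ Fin (Fintype.card (Fin n)))).encard :=
        Set.encard_le_encard_of_injOn (Set.mapsTo_univ _ _) hinj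
    _ = n ! := by
        rw [Set.encard_univ, ENat.card_eq_coe_fintype_card,
          Fintype.card_equiv (Fintype.equivFin _), Fintype.card_fin]

end IsLexCode

section TailPrefixChain

variable {α : Type*} {f : ℕ → List α}

theorem getElem?_eq_head?_of_tail_isPrefix (hf : ∀ k, (f k).tail <+: f (k + 1)) :
    ∀ {i k : ℕ}, i < (f k).length → (f k)[i]? = (f (k + i)).head?
  | 0, k, _ => by simp [List.head?_eq_getElem?]
  | i + 1, k, hi => by
    have hi' : i < (f k).tail.length := by simpa [List.length_tail] using Nat.lt_sub_of_add_lt hi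
    have hstep := List.prefix_iff_getElem?.1 (hf k) i hi'
    rw [← List.getElem?_tail, List.getElem?_eq_getElem hi', ← hstep,
      getElem?_eq_head?_of_tail_isPrefix hf ((hf k).length_le.trans_lt' hi'), Nat.add_right_comm,
      Nat.add_assoc]

theorem getElem?_mod_eq_of_tail_isPrefix (hf : ∀ k, (f k).tail <+: f (k + 1)) {N : ℕ}
    (hper : Periodic f N) {i k : ℕ} (hi : i < (f k).length) : (f k)[i % N]? = (f k)[i]? := by
  have hhead : Periodic (fun k => (f k).head?) N := hper.comp List.head?
  rw [getElem?_eq_head?_of_tail_isPrefix hf ((Nat.mod_le i N).trans_lt hi),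
    getElem?_eq_head?_of_tail_isPrefix hf hi, ← hhead.map_mod_nat, Nat.add_mod_mod,
    hhead.map_mod_nat]

theorem isPrefix_or_isPrefix_of_take_eq (hf : ∀ k, (f k).tail <+: f (k + 1)) {N : ℕ}
    (hN : 0 < N) (hper : Periodic f N) {j k : ℕ} (h : (f j).take N = (f k).take N) :
    f j <+: f k ∨ f k <+: f j := by
  refine List.isPrefix_or_isPrefix_of_getElem?_eq fun i hij hik => ?_
  rw [← getElem?_mod_eq_of_tail_isPrefix hf hper hij,
    ← getElem?_mod_eq_of_tail_isPrefix hf hper hik, ← List.getElem?_take_of_lt (Nat.mod_lt i hN), h,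
    List.getElem?_take_of_lt (Nat.mod_lt i hN)]

end TailPrefixChain

theorem HasHamiltonianCycle.exists_periodic_tail_isPrefix {n : ℕ} {X : Set (List (Fin n))}
    (h : HasHamiltonianCycle X) :
    ∃ N : ℕ, 0 < N ∧ X.encard = N ∧ ∃ f : ℕ → List (Fin n),
      Periodic f N ∧ (∀ k, (f k).tail <+: f (k + 1)) ∧ X ⊆ Set.range f := by
  obtain ⟨cyc, hc, hnd, hcX, hedge⟩ := h
  have hN : 0 < cyc.length := List.length_pos_iff.2 hc
  set f : ℕ → List (Fin n) := fun k => cyc[k % cyc.length]'(Nat.mod_lt _ hN) with hf_def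
  refine ⟨cyc.length, hN, ?_, f, fun k => ?_, fun k => ?_, ?_⟩
  · have hXc : X = cyc.toFinset := Set.ext fun x => by simp [hcX]
    rw [hXc, Set.encard_coe_eq_coe_finsetCard, List.toFinset_card_of_nodup hnd]
  · simp only [hf_def, Nat.add_mod_right]
  · have hmem : (f k, f (k + 1)) ∈ cyc.zip (cyc.rotate 1) :=
      List.mem_iff_getElem.2 ⟨k % cyc.length, by simp [Nat.mod_lt _ hN], by simp [hf_def]⟩
    obtain ⟨-, -, a, ha⟩ := hedge _ hmem
    exact List.IsPrefix.tail_of_cons ha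
  · intro x hx
    obtain ⟨i, hi, rfl⟩ := List.getElem_of_mem ((hcX x).2 hx)
    exact ⟨i, by simp only [hf_def, Nat.mod_eq_of_lt hi]⟩

/-- If a lex-code `X` of degree `n` contains a word longer than `n!`, then `X` is not
Hamiltonian. -/
theorem stmt_17 (n : ℕ) (X : Set (List (Fin n))) (hX : IsLexCode n X)
    (h : ∃ x ∈ X, Nat.factorial n < x.length) :
    ¬ HasHamiltonianCycle X := by
  intro hH
  obtain ⟨N, hN, hXN, f, hper, hf, hXf⟩ := hH.exists_periodic_tail_isPrefix
  obtain ⟨x, hx, hlen⟩ := h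
  have hNx : N < x.length := by
    have : (N : ℕ∞) ≤ n ! := hXN ▸ hX.encard_le_factorial
    exact (Nat.cast_le.1 this).trans_lt hlen
  have hprefix_len : (x.take N).length = N := List.length_take_of_le hNx.le
  obtain ⟨y, hy, z, hz, hyz, hxy, hxz⟩ := hX.2.2 x hx (x.take N) (List.take_prefix N x)
    (by simp [List.take_eq_nil_iff, hN.ne', hX.1 x hx])
    (fun heq => hNx.ne' (by rw [← heq, hprefix_len]))
  obtain ⟨j, rfl⟩ := hXf hy
  obtain ⟨k, rfl⟩ := hXf hz
  have htake : (f j).take N = (f k).take N := by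
    rw [List.prefix_iff_eq_take, hprefix_len] at hxy hxz
    rw [← hxy, ← hxz]
  rcases isPrefix_or_isPrefix_of_take_eq hf hN hper htake with hjk | hkj
  · exact hyz (hX.eq_of_isPrefix hy hz hjk)
  · exact hyz (hX.eq_of_isPrefix hz hy hkj).symm
end
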